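/- Let p and q be probability distributions on k elements with non-increasingly ordered entries such that p ≻ q, and let δ ≥ 0. Then the flattest δ-approximations satisfy p̲^(δ) ≻ q̲^(δ). -/

import Mathlib

open Finset

noncomputable section

/-- The ℓ¹ distance `‖a − b‖ = Σᵢ |aᵢ − bᵢ|` between two vectors in `ℝ^k`. -/
def l1dist {k : ℕ} (a b : Fin k → ℝ) : ℝ := ∑ i, |a i - b i|

/-- A probability distribution on `k` elements: nonnegative entries summing to 1. -/
def IsProbDist {k : ℕ} (p : Fin k → ℝ) : Prop := (∀ i, 0 ≤ p i) ∧ ∑ i, p i = 1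

/-- The vector `a` rearranged in non-increasing order, `a↓`. -/
def descSort {k : ℕ} (a : Fin k → ℝ) : Fin k → ℝ := fun i => a (Tuple.sort a i.rev)

/-- The sum of the first `l` entries of `a` (1-based indexing: entries `1,…,l`). -/
def psum {k : ℕ} (a : Fin k → ℝ) (l : ℕ) : ℝ :=
  ∑ i ∈ univ.filter (fun i : Fin k => (i : ℕ) < l), a i

/-- The sum of the entries of `a` from position `l` to `k` (1-based indexing). -/
def tailSum {k : ℕ} (a : Fin k → ℝ) (l : ℕ) : ℝ :=
  ∑ i ∈ univ.filter (fun i : Fin k => l ≤ (i : ℕ) + 1), a i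

/-- `a` majorizes `b` (`a ≻ b`): the total sums agree and all partial sums of the
non-increasing rearrangements satisfy `Σ_{i=1}^l a↓ᵢ ≥ Σ_{i=1}^l b↓ᵢ` for `l = 1,…,k`. -/
def Majorizes {k : ℕ} (a b : Fin k → ℝ) : Prop :=
  (∑ i, a i = ∑ i, b i) ∧
  ∀ l : ℕ, 1 ≤ l → l ≤ k → psum (descSort b) l ≤ psum (descSort a) l

/-- The distribution `e₁ = (1,0,…,0)`. -/
def e1 (k : ℕ) : Fin k → ℝ := fun i => if (i : ℕ) = 0 then 1 else 0

/-- The uniform distribution `η = (1/k,…,1/k)`. -/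
def unif (k : ℕ) : Fin k → ℝ := fun _ => (k : ℝ)⁻¹

/-- The unnormalised vector `r` in the construction of the steepest approximation:
`r₁ = p₁ + δ/2`, `rᵢ = pᵢ` otherwise. -/
def steepR {k : ℕ} (δ : ℝ) (p : Fin k → ℝ) : Fin k → ℝ :=
  fun i => if (i : ℕ) = 0 then p i + δ / 2 else p i

/-- `lstar ∈ {1,…,k}` is the truncation index of the steepest `δ`-approximation of `p`:
`Σ_{i=1}^{l*} rᵢ ≤ 1 < Σ_{i=1}^{l*+1} rᵢ` (the second sum being meaningful for `l* < k`). -/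
def IsTruncIdx {k : ℕ} (δ : ℝ) (p : Fin k → ℝ) (lstar : ℕ) : Prop :=
  1 ≤ lstar ∧ lstar ≤ k ∧ psum (steepR δ p) lstar ≤ 1 ∧
    (lstar < k → 1 < psum (steepR δ p) (lstar + 1))

/-- `pbar` is the steepest `δ`-approximation `p̄^(δ)` of `p` (assumed non-increasingly
ordered): if `‖p − e₁‖ ≤ δ` then `pbar = e₁`; otherwise `pbar` agrees with `r` on the
first `l*` entries, has `1 − Σ_{i=1}^{l*} rᵢ` at position `l*+1`, and `0` afterwards. -/
def IsSteepest {k : ℕ} (δ : ℝ) (p pbar : Fin k → ℝ) : Prop :=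
  (l1dist p (e1 k) ≤ δ ∧ pbar = e1 k) ∨
  (δ < l1dist p (e1 k) ∧ ∃ lstar : ℕ, IsTruncIdx δ p lstar ∧
    ∀ i : Fin k, pbar i =
      if (i : ℕ) < lstar then steepR δ p i
      else if (i : ℕ) = lstar then 1 - psum (steepR δ p) lstar
      else 0)

/-- `ε(x) = Σ_{i : pᵢ ≥ x} (pᵢ − x)`. -/
def epsFn {k : ℕ} (p : Fin k → ℝ) (x : ℝ) : ℝ :=
  ∑ i ∈ univ.filter (fun i : Fin k => x ≤ p i), (p i - x)

/-- `γ(y) = Σ_{i : pᵢ ≤ y} (y − pᵢ)`. -/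
def gammaFn {k : ℕ} (p : Fin k → ℝ) (y : ℝ) : ℝ :=
  ∑ i ∈ univ.filter (fun i : Fin k => p i ≤ y), (y - p i)

/-- `pflat` is the flattest `δ`-approximation of `p` built from the cutting level `x*` and
the filling level `y*`: `x*, y* ∈ [0,1]`, `ε(x*) = γ(y*) = δ/2`, and `pflat` equals `x*`
where `pᵢ ≥ x*`, equals `y*` where `pᵢ ≤ y*`, and equals `pᵢ` otherwise. -/
def IsFlattestWith {k : ℕ} (δ : ℝ) (p pflat : Fin k → ℝ) (x y : ℝ) : Prop :=
  x ∈ Set.Icc (0 : ℝ) 1 ∧ y ∈ Set.Icc (0 : ℝ) 1 ∧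
  epsFn p x = δ / 2 ∧ gammaFn p y = δ / 2 ∧
  ∀ i : Fin k, pflat i = if x ≤ p i then x else if p i ≤ y then y else p i

/-- `pflat` is the flattest `δ`-approximation `p̲^(δ)` of `p` (assumed non-increasingly
ordered): if `‖p − η‖ ≤ δ` then `pflat = η`; otherwise it is obtained by cutting at
level `x*` and filling at level `y*`. -/
def IsFlattest {k : ℕ} (δ : ℝ) (p pflat : Fin k → ℝ) : Prop :=
  (l1dist p (unif k) ≤ δ ∧ pflat = unif k) ∨
  (δ < l1dist p (unif k) ∧ ∃ x y : ℝ, IsFlattestWith δ p pflat x y)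

end

/-!
Both flattenings are antitone, so the majorization amounts to comparing partial sums `S`.
Cutting at level `x` removes at most `δ / 2` from every partial sum, so
`S p̲ ≥ S p - δ / 2 ≥ S q - δ / 2`. The partial sums of `q̲` are linear of slope `x` on the
cutting region, equal to `S q - δ / 2` between the cutting and the filling region, and linear
of slope `y` on the filling region. Partial sums of an antitone vector are concave, so `S p̲`,
which dominates `S q̲` at the ends of these linear pieces, dominates it everywhere. In the
degenerate cases one uses that `‖p - η‖ = 2 ε(1/k)` does not decrease under majorization.
-/

section PartialSums

variable {k : ℕ}

lemma psum_zero (a : Fin k → ℝ) : psum a 0 = 0 := by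
  simp [psum]

lemma psum_self (a : Fin k → ℝ) : psum a k = ∑ i, a i := by
  simp [psum]

lemma psum_eq_mul_of_forall_lt {a : Fin k → ℝ} {c : ℝ} {l : ℕ} (hl : l ≤ k)
    (h : ∀ i : Fin k, (i : ℕ) < l → a i = c) : psum a l = l * c := by
  rw [psum, sum_congr rfl fun i hi => h i (mem_filter.1 hi).2, sum_const,
    Fin.card_filter_val_lt, min_eq_right hl, nsmul_eq_mul]

lemma psum_sub_const (a : Fin k → ℝ) (c : ℝ) {l : ℕ} (hl : l ≤ k) :
    psum (fun i => a i - c) l = psum a l - l * c := by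
  rw [psum, sum_sub_distrib, sum_const, Fin.card_filter_val_lt, min_eq_right hl, nsmul_eq_mul,
    psum]

lemma psum_add_sum_filter (a : Fin k → ℝ) {l m : ℕ} (hlm : l ≤ m) :
    psum a l + ∑ i ∈ univ.filter (fun i : Fin k => l ≤ (i : ℕ) ∧ (i : ℕ) < m), a i = psum a m := by
  rw [psum, psum, ← sum_union (disjoint_filter.2 fun i _ h₁ h₂ => by omega)]
  congr 1
  ext i
  simp only [mem_union, mem_filter, mem_univ, true_and]
  omega

lemma psum_eq_sub_mul_of_forall_ge {a : Fin k → ℝ} {c : ℝ} {l : ℕ} (hl : l ≤ k)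
    (h : ∀ i : Fin k, l ≤ (i : ℕ) → a i = c) : psum a l = psum a k - (k - l) * c := by
  have htail := psum_add_sum_filter (fun i => a i - c) hl
  rw [sum_eq_zero fun i hi => sub_eq_zero.2 (h i (mem_filter.1 hi).2.1), add_zero,
    psum_sub_const a c hl, psum_sub_const a c le_rfl] at htail
  linarith

lemma Antitone.min_psum_le {b : Fin k → ℝ} (hb : Antitone b) {m l n : ℕ} (hml : m ≤ l)
    (hln : l ≤ n) : min (psum b m) (psum b n) ≤ psum b l := by
  have hleft := psum_add_sum_filter b hml
  have hright := psum_add_sum_filter b hln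
  by_cases hnonneg : ∀ i : Fin k, m ≤ (i : ℕ) → (i : ℕ) < l → 0 ≤ b i
  · have : 0 ≤ ∑ i ∈ univ.filter (fun i : Fin k => m ≤ (i : ℕ) ∧ (i : ℕ) < l), b i :=
      sum_nonneg fun i hi => hnonneg i (mem_filter.1 hi).2.1 (mem_filter.1 hi).2.2
    exact min_le_of_left_le (by linarith)
  · push Not at hnonneg
    obtain ⟨j, -, hjl, hj⟩ := hnonneg
    have : ∑ i ∈ univ.filter (fun i : Fin k => l ≤ (i : ℕ) ∧ (i : ℕ) < n), b i ≤ 0 :=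
      sum_nonpos fun i hi => (hb (Fin.le_def.2 (hjl.le.trans (mem_filter.1 hi).2.1))).trans hj.le
    exact min_le_of_right_le (by linarith)

lemma Antitone.min_psum_sub_mul_le {a : Fin k → ℝ} (ha : Antitone a) (c : ℝ) {m l n : ℕ}
    (hml : m ≤ l) (hln : l ≤ n) (hn : n ≤ k) :
    min (psum a m - m * c) (psum a n - n * c) ≤ psum a l - l * c := by
  have hb : Antitone fun i => a i - c := fun i j hij => sub_le_sub_right (ha hij) c
  have := hb.min_psum_le hml hln
  rwa [psum_sub_const a c (hml.trans (hln.trans hn)), psum_sub_const a c (hln.trans hn),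
    psum_sub_const a c hn] at this

lemma Antitone.mul_le_psum_of_le {a : Fin k → ℝ} (ha : Antitone a) {c : ℝ} {l m : ℕ}
    (hlm : l ≤ m) (hm : m ≤ k) (h : m * c ≤ psum a m) : l * c ≤ psum a l := by
  have := ha.min_psum_sub_mul_le c (Nat.zero_le l) hlm hm
  rw [psum_zero, Nat.cast_zero, zero_mul, sub_zero, min_eq_left (by linarith)] at this
  linarith

lemma Antitone.psum_sub_mul_le_psum_of_le {a : Fin k → ℝ} (ha : Antitone a) {c : ℝ} {m l : ℕ}
    (hml : m ≤ l) (hl : l ≤ k) (h : psum a k - (k - m) * c ≤ psum a m) :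
    psum a k - (k - l) * c ≤ psum a l := by
  have := ha.min_psum_sub_mul_le c hml hl le_rfl
  rw [min_eq_right (by linarith)] at this
  linarith

end PartialSums

section Majorization

variable {k : ℕ}

lemma ne_zero_of_sum_eq_one {p : Fin k → ℝ} (hsum : ∑ i, p i = 1) : k ≠ 0 := by
  rintro rfl
  simp at hsum

lemma descSort_eq_self_of_antitone {a : Fin k → ℝ} (ha : Antitone a) : descSort a = a := by
  have hmono : Monotone (a ∘ Fin.revPerm) := fun i j hij => ha (Fin.rev_le_rev.2 hij)
  funext i
  simpa [descSort] using (congrFun (Tuple.comp_sort_eq_comp_iff_monotone.2 hmono) i.rev).symm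

lemma majorizes_iff_of_antitone {a b : Fin k → ℝ} (ha : Antitone a) (hb : Antitone b) :
    Majorizes a b ↔ ∑ i, a i = ∑ i, b i ∧ ∀ l ≤ k, psum b l ≤ psum a l := by
  rw [Majorizes, descSort_eq_self_of_antitone ha, descSort_eq_self_of_antitone hb]
  refine and_congr_right fun _ => ⟨fun h l hl => ?_, fun h l _ hl => h l hl⟩
  rcases l.eq_zero_or_pos with rfl | hl₀
  · rw [psum_zero, psum_zero]
  · exact h l hl₀ hl

lemma epsFn_eq_sum_max (p : Fin k → ℝ) (c : ℝ) : epsFn p c = ∑ i, max (p i - c) 0 := by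
  rw [epsFn, sum_filter]
  refine sum_congr rfl fun i _ => ?_
  split_ifs with h
  · exact (max_eq_left (sub_nonneg.2 h)).symm
  · exact (max_eq_right (by linarith)).symm

lemma gammaFn_eq_sum_max (p : Fin k → ℝ) (c : ℝ) : gammaFn p c = ∑ i, max (c - p i) 0 := by
  rw [gammaFn, sum_filter]
  refine sum_congr rfl fun i _ => ?_
  split_ifs with h
  · exact (max_eq_left (sub_nonneg.2 h)).symm
  · exact (max_eq_right (by linarith)).symm

lemma epsFn_antitone (p : Fin k → ℝ) : Antitone (epsFn p) := by
  intro c d hcd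
  simp only [epsFn_eq_sum_max]
  gcongr

lemma gammaFn_monotone (p : Fin k → ℝ) : Monotone (gammaFn p) := by
  intro c d hcd
  simp only [gammaFn_eq_sum_max]
  gcongr

lemma l1dist_unif_eq_epsFn_add_gammaFn (p : Fin k → ℝ) :
    l1dist p (unif k) = epsFn p (k : ℝ)⁻¹ + gammaFn p (k : ℝ)⁻¹ := by
  rw [epsFn_eq_sum_max, gammaFn_eq_sum_max, l1dist, ← sum_add_distrib]
  refine sum_congr rfl fun i _ => ?_
  rw [unif, ← max_zero_add_max_neg_zero_eq_abs_self, neg_sub]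

lemma gammaFn_sub_epsFn (p : Fin k → ℝ) (c : ℝ) :
    gammaFn p c - epsFn p c = k * c - ∑ i, p i := by
  rw [epsFn_eq_sum_max, gammaFn_eq_sum_max, ← sum_sub_distrib]
  simp_rw [← neg_sub c, max_zero_sub_max_neg_zero_eq_self]
  simp [sum_sub_distrib]

lemma gammaFn_inv_eq_epsFn_inv {p : Fin k → ℝ} (hsum : ∑ i, p i = 1) :
    gammaFn p (k : ℝ)⁻¹ = epsFn p (k : ℝ)⁻¹ := by
  have hk : (k : ℝ) ≠ 0 := Nat.cast_ne_zero.2 (ne_zero_of_sum_eq_one hsum)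
  have := gammaFn_sub_epsFn p (k : ℝ)⁻¹
  rw [mul_inv_cancel₀ hk, hsum, sub_self] at this
  linarith

lemma l1dist_unif_eq_two_mul_epsFn {p : Fin k → ℝ} (hsum : ∑ i, p i = 1) :
    l1dist p (unif k) = 2 * epsFn p (k : ℝ)⁻¹ := by
  rw [l1dist_unif_eq_epsFn_add_gammaFn, gammaFn_inv_eq_epsFn_inv hsum, two_mul]

lemma psum_sub_mul_le_epsFn (p : Fin k → ℝ) (c : ℝ) {l : ℕ} (hl : l ≤ k) :
    psum p l - l * c ≤ epsFn p c := by
  rw [← psum_sub_const p c hl, psum, epsFn_eq_sum_max]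
  calc ∑ i ∈ univ.filter (fun i : Fin k => (i : ℕ) < l), (p i - c)
      ≤ ∑ i ∈ univ.filter (fun i : Fin k => (i : ℕ) < l), max (p i - c) 0 :=
        sum_le_sum fun i _ => le_max_left _ _
    _ ≤ ∑ i, max (p i - c) 0 :=
        sum_le_sum_of_subset_of_nonneg (filter_subset _ _) fun i _ _ => le_max_right _ _

lemma Antitone.exists_psum_sub_mul_eq_epsFn {q : Fin k → ℝ} (hq : Antitone q) (c : ℝ) :
    ∃ m ≤ k, psum q m - m * c = epsFn q c := by
  have hm : #(univ.filter fun i => c ≤ q i) ≤ k := (card_le_univ _).trans_eq (Fintype.card_fin k)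
  refine ⟨_, hm, ?_⟩
  rw [← psum_sub_const q c hm, psum, epsFn]
  congr 1
  ext i
  simp only [mem_filter, mem_univ, true_and]
  exact Fin.lt_card_filter_univ_iff_apply_of_imp _ fun i j hji h => h.trans (hq hji)

lemma epsFn_le_of_psum_le {p q : Fin k → ℝ} (hq : Antitone q)
    (h : ∀ l ≤ k, psum q l ≤ psum p l) (c : ℝ) : epsFn q c ≤ epsFn p c := by
  obtain ⟨m, hm, hεq⟩ := hq.exists_psum_sub_mul_eq_epsFn c
  linarith [h m hm, psum_sub_mul_le_epsFn p c hm]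

lemma l1dist_unif_le_of_psum_le {p q : Fin k → ℝ} (hp : ∑ i, p i = 1) (hq : ∑ i, q i = 1)
    (hqa : Antitone q) (h : ∀ l ≤ k, psum q l ≤ psum p l) :
    l1dist q (unif k) ≤ l1dist p (unif k) := by
  rw [l1dist_unif_eq_two_mul_epsFn hp, l1dist_unif_eq_two_mul_epsFn hq]
  linarith [epsFn_le_of_psum_le hqa h (k : ℝ)⁻¹]

end Majorization

namespace IsFlattestWith

variable {k : ℕ} {δ x y : ℝ} {q qflat : Fin k → ℝ}

lemma lt_of_lt_l1dist (h : IsFlattestWith δ q qflat x y) (hsum : ∑ i, q i = 1)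
    (hfar : δ < l1dist q (unif k)) : y < x := by
  obtain ⟨-, -, hx, hy, -⟩ := h
  rw [l1dist_unif_eq_two_mul_epsFn hsum] at hfar
  have hxk : (k : ℝ)⁻¹ < x := (epsFn_antitone q).reflect_lt (by linarith)
  have hyk : y < (k : ℝ)⁻¹ :=
    (gammaFn_monotone q).reflect_lt (by rw [gammaFn_inv_eq_epsFn_inv hsum]; linarith)
  exact hyk.trans hxk

lemma eq_clamp (h : IsFlattestWith δ q qflat x y) (hyx : y < x) (i : Fin k) :
    qflat i = max y (min x (q i)) := by
  obtain ⟨-, -, -, -, hform⟩ := h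
  rw [hform i]
  split_ifs with hx hy
  · rw [min_eq_left hx, max_eq_right hyx.le]
  · rw [min_eq_right (by linarith), max_eq_left hy]
  · rw [min_eq_right (by linarith), max_eq_right (by linarith)]

lemma antitone (h : IsFlattestWith δ q qflat x y) (hyx : y < x) (hq : Antitone q) :
    Antitone qflat := by
  intro i j hij
  rw [h.eq_clamp hyx, h.eq_clamp hyx]
  gcongr
  exact hq hij

lemma sub_eq (h : IsFlattestWith δ q qflat x y) (hyx : y < x) (i : Fin k) :
    qflat i - q i = max (y - q i) 0 - max (q i - x) 0 := by
  rw [h.eq_clamp hyx]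
  rcases le_total x (q i) with hx | hx
  · rw [min_eq_left hx, max_eq_right hyx.le, max_eq_right (by linarith),
      max_eq_left (by linarith)]
    ring
  · rw [min_eq_right hx, max_eq_right (by linarith : q i - x ≤ 0)]
    rcases le_total y (q i) with hy | hy
    · rw [max_eq_right hy, max_eq_right (by linarith)]
      ring
    · rw [max_eq_left hy, max_eq_left (by linarith)]
      ring

lemma sum_eq (h : IsFlattestWith δ q qflat x y) (hyx : y < x) : ∑ i, qflat i = ∑ i, q i := by
  have hdiff := sum_congr rfl fun i (_ : i ∈ univ) => h.sub_eq hyx i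
  rw [sum_sub_distrib, sum_sub_distrib, ← gammaFn_eq_sum_max, ← epsFn_eq_sum_max, h.2.2.1,
    h.2.2.2.1, sub_self] at hdiff
  linarith

lemma psum_sub_half_le (h : IsFlattestWith δ q qflat x y) (l : ℕ) :
    psum q l - δ / 2 ≤ psum qflat l := by
  obtain ⟨-, -, hx, -, hform⟩ := h
  have hcut : ∀ i, q i - qflat i ≤ max (q i - x) 0 := by
    intro i
    rw [hform i]
    split_ifs with hx hy
    · exact le_max_left _ _
    · exact (by linarith : q i - y ≤ 0).trans (le_max_right _ _)
    · simp
  have : ∑ i ∈ univ.filter (fun i : Fin k => (i : ℕ) < l), (q i - qflat i) ≤ δ / 2 := by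
    rw [← hx, epsFn_eq_sum_max]
    exact (sum_le_sum fun i _ => hcut i).trans
      (sum_le_sum_of_subset_of_nonneg (filter_subset _ _) fun i _ _ => le_max_right _ _)
  rw [sum_sub_distrib] at this
  rw [psum, psum]
  linarith

lemma psum_eq_psum_sub_half (h : IsFlattestWith δ q qflat x y) (hyx : y < x) {l : ℕ}
    (hfill : ∀ i : Fin k, (i : ℕ) < l → y < q i) (hcut : ∀ i : Fin k, l ≤ (i : ℕ) → q i < x) :
    psum qflat l = psum q l - δ / 2 := by
  have : psum qflat l - psum q l = -(δ / 2) := by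
    calc psum qflat l - psum q l
        = ∑ i ∈ univ.filter (fun i : Fin k => (i : ℕ) < l), (qflat i - q i) := by
          rw [psum, psum, sum_sub_distrib]
      _ = ∑ i ∈ univ.filter (fun i : Fin k => (i : ℕ) < l), -max (q i - x) 0 := by
          refine sum_congr rfl fun i hi => ?_
          rw [h.sub_eq hyx, max_eq_right (by linarith [hfill i (mem_filter.1 hi).2]), zero_sub]
      _ = ∑ i, -max (q i - x) 0 := by
          refine sum_subset (filter_subset _ _) fun i _ hi => ?_
          have := hcut i (not_lt.1 fun hil => hi (mem_filter.2 ⟨mem_univ i, hil⟩))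
          rw [max_eq_right (by linarith), neg_zero]
      _ = -(δ / 2) := by rw [sum_neg_distrib, ← epsFn_eq_sum_max, h.2.2.1]
  linarith

lemma psum_le (h : IsFlattestWith δ q qflat x y) (hyx : y < x) (hq : Antitone q)
    {a : Fin k → ℝ} (ha : Antitone a) (hsum : ∑ i, a i = ∑ i, q i)
    (hlow : ∀ l ≤ k, psum q l - δ / 2 ≤ psum a l) :
    ∀ l ≤ k, psum qflat l ≤ psum a l := by
  set m₁ := #(univ.filter fun i => x ≤ q i)
  set m₂ := #(univ.filter fun i => y < q i)
  have hm₁ : ∀ i : Fin k, (i : ℕ) < m₁ ↔ x ≤ q i :=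
    fun i => Fin.lt_card_filter_univ_iff_apply_of_imp _ fun i j hji h => h.trans (hq hji)
  have hm₂ : ∀ i : Fin k, (i : ℕ) < m₂ ↔ y < q i :=
    fun i => Fin.lt_card_filter_univ_iff_apply_of_imp _ fun i j hji h => h.trans_le (hq hji)
  have hm₁₂ : m₁ ≤ m₂ := card_le_card (monotone_filter_right _ fun i _ hi => hyx.trans_le hi)
  have hm₂k : m₂ ≤ k := (card_le_univ _).trans_eq (Fintype.card_fin k)
  have hmid : ∀ j, m₁ ≤ j → j ≤ m₂ → psum qflat j ≤ psum a j := by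
    intro j hj₁ hj₂
    rw [h.psum_eq_psum_sub_half hyx (fun i hi => (hm₂ i).1 (by omega))
      (fun i hi => not_le.1 fun hx => by have := (hm₁ i).2 hx; omega)]
    exact hlow j (hj₂.trans hm₂k)
  intro l hl
  rcases le_total l m₁ with hl₁ | hl₁
  · have hcut : ∀ j ≤ m₁, psum qflat j = j * x := fun j hj =>
      psum_eq_mul_of_forall_lt (by omega) fun i hi => by
        rw [h.eq_clamp hyx, min_eq_left ((hm₁ i).1 (by omega)), max_eq_right hyx.le]
    rw [hcut l hl₁]
    exact ha.mul_le_psum_of_le hl₁ (hm₁₂.trans hm₂k) (hcut m₁ le_rfl ▸ hmid m₁ le_rfl hm₁₂)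
  rcases le_total l m₂ with hl₂ | hl₂
  · exact hmid l hl₁ hl₂
  · have htotal : psum qflat k = psum a k := by rw [psum_self, psum_self, h.sum_eq hyx, hsum]
    have hfill : ∀ j, m₂ ≤ j → j ≤ k → psum qflat j = psum a k - (k - j) * y :=
      fun j hj hjk => htotal ▸ psum_eq_sub_mul_of_forall_ge hjk fun i hi => by
        have hy : q i ≤ y := not_lt.1 fun hy => by have := (hm₂ i).2 hy; omega
        rw [h.eq_clamp hyx, min_eq_right (hy.trans hyx.le), max_eq_left hy]
    rw [hfill l hl₂ hl]
    exact ha.psum_sub_mul_le_psum_of_le hl₂ hl (hfill m₂ le_rfl hm₂k ▸ hmid m₂ hm₁₂ le_rfl)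

end IsFlattestWith

lemma psum_unif {k l : ℕ} (hl : l ≤ k) : psum (unif k) l = l * (k : ℝ)⁻¹ :=
  psum_eq_mul_of_forall_lt hl fun _ _ => rfl

lemma sum_unif {k : ℕ} (hk : k ≠ 0) : ∑ i, unif k i = 1 := by
  rw [← psum_self, psum_unif le_rfl, mul_inv_cancel₀ (Nat.cast_ne_zero.2 hk)]

lemma psum_unif_le {k : ℕ} {a : Fin k → ℝ} (ha : Antitone a) (hsum : ∑ i, a i = 1) {l : ℕ}
    (hl : l ≤ k) : psum (unif k) l ≤ psum a l := by
  rw [psum_unif hl]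
  refine ha.mul_le_psum_of_le hl le_rfl ?_
  rw [← psum_unif le_rfl, psum_self, psum_self, sum_unif (ne_zero_of_sum_eq_one hsum), hsum]

theorem flattest_preserves_majorization_general {k : ℕ} (δ : ℝ)
    (p q : Fin k → ℝ) (hp : IsProbDist p) (hq : IsProbDist q)
    (hpord : Antitone p) (hqord : Antitone q) (hmaj : Majorizes p q)
    (pflat qflat : Fin k → ℝ)
    (hpflat : IsFlattest δ p pflat) (hqflat : IsFlattest δ q qflat) :
    Majorizes pflat qflat := by
  have hpq := ((majorizes_iff_of_antitone hpord hqord).1 hmaj).2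
  rcases hpflat with ⟨hpη, rfl⟩ | ⟨hpη, xp, yp, hpf⟩
  · rcases hqflat with ⟨-, rfl⟩ | ⟨hqη, -⟩
    · exact ⟨rfl, fun _ _ _ => le_rfl⟩
    · exact absurd (hpη.trans_lt hqη) (l1dist_unif_le_of_psum_le hp.2 hq.2 hqord hpq).not_gt
  have hyxp := hpf.lt_of_lt_l1dist hp.2 hpη
  have hpfa := hpf.antitone hyxp hpord
  have hpfs : ∑ i, pflat i = 1 := (hpf.sum_eq hyxp).trans hp.2
  rcases hqflat with ⟨-, rfl⟩ | ⟨hqη, xq, yq, hqf⟩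
  · exact (majorizes_iff_of_antitone hpfa antitone_const).2
      ⟨hpfs.trans (sum_unif (ne_zero_of_sum_eq_one hp.2)).symm,
        fun l hl => psum_unif_le hpfa hpfs hl⟩
  have hyxq := hqf.lt_of_lt_l1dist hq.2 hqη
  have hlow : ∀ l ≤ k, psum q l - δ / 2 ≤ psum pflat l := fun l hl =>
    by linarith [hpq l hl, hpf.psum_sub_half_le l]
  refine (majorizes_iff_of_antitone hpfa (hqf.antitone hyxq hqord)).2 ⟨?_, ?_⟩
  · rw [hpfs, hqf.sum_eq hyxq, hq.2]
  · exact hqf.psum_le hyxq hqord hpfa (by rw [hpfs, hq.2]) hlow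

/-- the flattest `δ`-approximation preserves the majorization order. -/
theorem flattest_preserves_majorization {k : ℕ} (δ : ℝ) (hδ : 0 ≤ δ)
    (p q : Fin k → ℝ) (hp : IsProbDist p) (hq : IsProbDist q)
    (hpord : Antitone p) (hqord : Antitone q) (hmaj : Majorizes p q)
    (pflat qflat : Fin k → ℝ)
    (hpflat : IsFlattest δ p pflat) (hqflat : IsFlattest δ q qflat) :
    Majorizes pflat qflat :=
  flattest_preserves_majorization_general δ p q hp hq hpord hqord hmaj pflat qflat hpflat hqflat
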